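/- arXiv:2011.07536 — 2 statements merged into one kernel-verified Lean document; each statement's English description precedes it below -/
import Mathlib

section
/- Let H be a division ring of finite dimension as a module over its center. Let L and F be division rings with injective ring homomorphisms H → L → F, and suppose that both L/H and F/H are Galois extensions (in the sense of Artin) with finite Galois groups. Then the restriction map Gal(F/H) → Gal(L/H) is well-defined: every ring automorphism of F fixing (the image of) H pointwise maps (the image of) L bijectively onto itself, and hence induces an automorphism of L fixing H pointwise. -/
/-- The group of ring automorphisms of `M` fixing the image of `ι : H →+* M` pointwise. -/
def RingHom.fixingSubgroup {H M : Type*} [Semiring H] [Semiring M] (ι : H →+* M) :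
    Subgroup (RingAut M) where
  carrier := {f | ∀ x : H, f (ι x) = ι x}
  one_mem' := fun _ => rfl
  mul_mem' := fun {a b} ha hb x => by
    simp only [Set.mem_setOf_eq] at ha hb ⊢
    show a (b (ι x)) = ι x
    rw [hb, ha]
  inv_mem' := fun {a} ha x => by
    simp only [Set.mem_setOf_eq] at ha ⊢
    show a.symm (ι x) = ι x
    rw [← ha x, RingEquiv.symm_apply_apply, ha]

/-- `M` is a Galois extension of `H` (along `ι`) in the sense of Artin: every element of `M`
fixed by all ring automorphisms of `M` fixing `ι(H)` pointwise lies in `ι(H)`. -/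
def RingHom.IsArtinGalois {H M : Type*} [Semiring H] [Semiring M] (ι : H →+* M) : Prop :=
  ∀ m : M, (∀ f : RingAut M, (∀ x : H, f (ι x) = ι x) → f m = m) → ∃ x : H, ι x = m

/-!
Conjugation by a nonzero element centralizing `H` is an automorphism of `F` over `H`; since
`Gal(F/H)` is finite, Artin's lemma and Wedderburn's little theorem force the centralizer of `H`
in `F` to be the center of `F`. Hence the centralizer `E` of `H` in `L` is a commutative ring
embedded in the field `Z(F)`. As `H` is finite-dimensional over its center, every element of `L`
is a sum `∑ h_j c_j` with `h_j ∈ H`, `c_j ∈ E`. An automorphism `f` of `F` over `H` fixes the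
coefficients of `∏_{g ∈ Gal(L/H)} (X - g c)`, which lie in `H`, so it sends `c` to a root
`g c ∈ E` of that polynomial in the field `Z(F)`; thus `f` maps `L` into itself.
-/

open Module Function

section CentralDivisionRing

variable {D : Type*} [DivisionRing D]

local notation "Z" => Subring.center D

theorem LinearIndependent.eq_zero_of_forall_sum_mul_mul_eq_zero {ι : Type*} {d : ι → D}
    (hd : LinearIndependent Z d) (s : Finset ι) (a : ι → D)
    (ha : ∀ x : D, ∑ k ∈ s, a k * x * d k = 0) : ∀ k ∈ s, a k = 0 := by
  classical
  induction s using Finset.strongInduction generalizing a with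
  | _ s ih =>
  intro k hk
  by_contra hak
  set b : ι → D := fun i => (a k)⁻¹ * a i
  have hbk : b k = 1 := inv_mul_cancel₀ hak
  have hb : ∀ x : D, ∑ i ∈ s, b i * x * d i = 0 := fun x => by
    simpa [b, ← Finset.mul_sum, mul_assoc] using congrArg ((a k)⁻¹ * ·) (ha x)
  -- The commutators `b i * w - w * b i` satisfy the same relation with the `k`-th term gone.
  have hcomm : ∀ w, ∀ i ∈ s, b i * w = w * b i := by
    intro w
    have hrel : ∀ x : D, ∑ i ∈ s.erase k, (b i * w - w * b i) * x * d i = 0 := fun x => by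
      rw [Finset.sum_erase _ (by simp [hbk])]
      calc ∑ i ∈ s, (b i * w - w * b i) * x * d i
          = ∑ i ∈ s, b i * (w * x) * d i - w * ∑ i ∈ s, b i * x * d i := by
            simp only [sub_mul, Finset.sum_sub_distrib, Finset.mul_sum, mul_assoc]
        _ = 0 := by rw [hb, hb, mul_zero, sub_zero]
    intro i hi
    rcases eq_or_ne i k with rfl | hik
    · simp [hbk]
    · exact sub_eq_zero.mp (ih _ (Finset.erase_ssubset hk) _ hrel i (Finset.mem_erase.2 ⟨hik, hi⟩))
  have hcentral : ∀ i ∈ s, b i ∈ Z := fun i hi =>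
    Subring.mem_center_iff.mpr fun w => (hcomm w i hi).symm
  let g : ι → Z := fun i => if h : i ∈ s then ⟨b i, hcentral i h⟩ else 0
  have hsum : ∑ i ∈ s, g i • d i = 0 := by
    rw [← hb 1]
    refine Finset.sum_congr rfl fun i hi => ?_
    simp [g, hi, Subring.smul_def]
  have := linearIndependent_iff'.mp hd s g hsum k hk
  simp [g, hk, hbk] at this

variable {ι : Type*} [Fintype ι]

variable (D) in
def sandwich (e : ι → D) : (ι → D) →ₗ[Z] Module.End Z D where
  toFun c :=
    { toFun x := ∑ i, c i * x * e i
      map_add' x y := by simp [mul_add, add_mul, Finset.sum_add_distrib]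
      map_smul' r x := by
        change ∑ i, c i * (r * x) * e i = r * ∑ i, c i * x * e i
        simp only [Finset.mul_sum, ← mul_assoc, Subring.mem_center_iff.mp r.2] }
  map_add' c c' := by ext x; simp [add_mul, Finset.sum_add_distrib]
  map_smul' r c := by ext x; simp [Subring.smul_def, Finset.mul_sum, mul_assoc]

-- `D ⊗_Z Dᵐᵒᵖ → End_Z D` is injective, hence bijective by counting dimensions.
theorem sandwich_surjective [Module.Finite Z D] (e : Basis ι Z D) :
    Surjective (sandwich D e) := by
  have hinj : Injective (sandwich D e) := by
    refine (injective_iff_map_eq_zero _).mpr fun c hc => funext fun i => ?_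
    exact e.linearIndependent.eq_zero_of_forall_sum_mul_mul_eq_zero Finset.univ c
      (fun x => LinearMap.congr_fun hc x) i (Finset.mem_univ i)
  refine (LinearMap.injective_iff_surjective_of_finrank_eq_finrank ?_).mp hinj
  rw [Module.finrank_pi_fintype, Module.finrank_linearMap, Finset.sum_const,
    Module.finrank_eq_card_basis e, smul_eq_mul, Finset.card_univ]

variable {R : Type*} [Ring R] (φ : D →+* R)

theorem sum_map_mul_mul_map_eq_sum_basis (hφ : ∀ z ∈ Z, φ z ∈ Subring.center R)
    (e : Basis ι Z D) {κ : Type*} [Fintype κ] (a b : κ → D) (x : R) :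
    ∑ k, φ (a k) * x * φ (b k) = ∑ i, φ (∑ k, (e.repr (b k) i : D) * a k) * x * φ (e i) := by
  have hexpand : ∀ k, φ (a k) * x * φ (b k)
      = ∑ i, φ ((e.repr (b k) i : D) * a k) * x * φ (e i) := fun k => by
    conv_lhs => rw [← e.sum_repr (b k)]
    simp only [map_sum, Finset.mul_sum, Subring.smul_def, smul_eq_mul, map_mul, ← mul_assoc,
      Subring.mem_center_iff.mp (hφ _ (e.repr (b k) _).2)]
  simp only [hexpand, map_sum, Finset.sum_mul]
  exact Finset.sum_comm

-- An identity of sandwich operators on `D` is one in `D ⊗_Z Dᵐᵒᵖ`, so it holds in `R` too.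
theorem sum_map_mul_mul_map_eq_of_forall [Module.Finite Z D]
    (hφ : ∀ z ∈ Z, φ z ∈ Subring.center R) {κ κ' : Type*} [Fintype κ] [Fintype κ']
    {a b : κ → D} {a' b' : κ' → D}
    (hab : ∀ h : D, ∑ k, a k * h * b k = ∑ k, a' k * h * b' k) (x : R) :
    ∑ k, φ (a k) * x * φ (b k) = ∑ k, φ (a' k) * x * φ (b' k) := by
  let e := Module.finBasis Z D
  have hcoeff : ∀ i, ∑ k, (e.repr (b k) i : D) * a k = ∑ k, (e.repr (b' k) i : D) * a' k := by
    refine fun i => sub_eq_zero.mp <| e.linearIndependent.eq_zero_of_forall_sum_mul_mul_eq_zero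
      Finset.univ (fun i => ∑ k, (e.repr (b k) i : D) * a k - ∑ k, (e.repr (b' k) i : D) * a' k)
      (fun h => ?_) i (Finset.mem_univ i)
    simp only [sub_mul, Finset.sum_sub_distrib]
    have hD := sum_map_mul_mul_map_eq_sum_basis (RingHom.id D) (fun _ hz => hz) e a b h
    have hD' := sum_map_mul_mul_map_eq_sum_basis (RingHom.id D) (fun _ hz => hz) e a' b' h
    simpa [sub_eq_zero] using hD.symm.trans ((hab h).trans hD')
  rw [sum_map_mul_mul_map_eq_sum_basis φ hφ e a b, sum_map_mul_mul_map_eq_sum_basis φ hφ e a' b']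
  simp only [hcoeff]

theorem exists_eq_sum_map_mul_mem_centralizer [Module.Finite Z D]
    (hφ : ∀ z ∈ Z, φ z ∈ Subring.center R) (x : R) :
    ∃ (n : ℕ) (d : Fin n → D) (c : Fin n → R),
      (∀ j, c j ∈ Subring.centralizer (Set.range φ)) ∧ x = ∑ j, φ (d j) * c j := by
  let e := Module.finBasis Z D
  obtain ⟨P, hP⟩ : ∃ P : Fin (Module.finrank Z D) → Fin (Module.finrank Z D) → D,
      ∀ j h, ∑ i, P j i * h * e i = (e.coord j h : D) := by
    choose P hP using fun j => sandwich_surjective e (Algebra.linearMap Z D ∘ₗ e.coord j)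
    exact ⟨P, fun j h => LinearMap.congr_fun (hP j) h⟩
  refine ⟨_, e, fun j => ∑ i, φ (P j i) * x * φ (e i), fun j => ?_, ?_⟩
  · rintro _ ⟨w, rfl⟩
    have hop : ∀ h, ∑ i, (w * P j i) * h * e i = ∑ i, P j i * h * (e i * w) := fun h =>
      calc ∑ i, (w * P j i) * h * e i = w * (e.coord j h : D) := by
            simp only [← hP, Finset.mul_sum, mul_assoc]
        _ = (e.coord j h : D) * w := Subring.mem_center_iff.mp (e.coord j h).2 w
        _ = ∑ i, P j i * h * (e i * w) := by simp only [← hP, Finset.sum_mul, mul_assoc]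
    have := sum_map_mul_mul_map_eq_of_forall φ hφ hop x
    simpa only [map_mul, Finset.mul_sum, Finset.sum_mul, mul_assoc] using this
  · have hop : ∀ h, ∑ p : Fin _ × Fin _, (e p.1 * P p.1 p.2) * h * e p.2
        = ∑ _ : Unit, (1 : D) * h * 1 := fun h =>
      calc ∑ p : Fin _ × Fin _, (e p.1 * P p.1 p.2) * h * e p.2
          = ∑ j, e j * ∑ i, P j i * h * e i := by
            simp only [Fintype.sum_prod_type, Finset.mul_sum, mul_assoc]
        _ = ∑ j, (e.coord j h : D) * e j := Finset.sum_congr rfl fun j _ => by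
            rw [hP, Subring.mem_center_iff.mp (e.coord j h).2]
        _ = ∑ _ : Unit, (1 : D) * h * 1 := by
            simpa [Subring.smul_def] using e.sum_repr h
    have := sum_map_mul_mul_map_eq_of_forall φ hφ hop x
    simpa [Fintype.sum_prod_type, Finset.mul_sum, mul_assoc] using this.symm

end CentralDivisionRing

section FixingSubgroup

variable {F : Type*} [DivisionRing F]

theorem Submodule.exists_ne_zero_forall_apply_eq_of_forall_map_mem {ι : Type*} [Finite ι]
    (S : Set (RingAut F)) (W : Submodule F (ι → F))
    (hW : ∀ g ∈ S, ∀ w ∈ W, (fun i => g (w i)) ∈ W) (hne : W ≠ ⊥) :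
    ∃ w ∈ W, w ≠ 0 ∧ ∀ g ∈ S, ∀ i, g (w i) = w i := by
  obtain ⟨w, hwW, hw0⟩ := Submodule.exists_mem_ne_zero_of_ne_bot hne
  induction hn : (support w).ncard using Nat.strong_induction_on generalizing w with
  | _ n ih =>
  obtain ⟨j, hj⟩ := ne_iff.mp hw0
  set v := (w j)⁻¹ • w
  have hvW : v ∈ W := W.smul_mem _ hwW
  have hvj : v j = 1 := inv_mul_cancel₀ hj
  by_cases hfix : ∀ g ∈ S, ∀ i, g (v i) = v i
  · exact ⟨v, hvW, fun h => by simp [h] at hvj, hfix⟩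
  obtain ⟨g, hg, i, hi⟩ : ∃ g ∈ S, ∃ i, g (v i) ≠ v i := by simpa using hfix
  -- Normalizing `v j = 1` makes `v - g v` vanish at `j`: it has strictly smaller support.
  have hsupp : support (v - fun i => g (v i)) ⊂ support w := by
    refine Set.ssubset_iff_of_subset (fun k hk => ?_) |>.mpr ⟨j, hj, by simp [hvj]⟩
    by_contra hwk
    simp [v, show w k = 0 from not_not.mp hwk] at hk
  exact ih _ (hn ▸ Set.ncard_lt_ncard hsupp) _ (W.sub_mem hvW (hW g hg v hvW))
    (fun h => hi (sub_eq_zero.mp (congrFun h i)).symm) rfl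

variable {H : Type*} [DivisionRing H] {φ : H →+* F}

theorem rank_le_card_fixingSubgroup (hφ : φ.IsArtinGalois) [Finite φ.fixingSubgroup] :
    letI := Module.compHom F φ
    Module.rank H F ≤ Nat.card φ.fixingSubgroup := by
  let := Module.compHom F φ
  have := Fintype.ofFinite φ.fixingSubgroup
  refine rank_le fun s hs => ?_
  by_contra! hcard
  let Φ : (s → F) →ₗ[F] (φ.fixingSubgroup → F) :=
    LinearMap.pi fun γ => Fintype.linearCombination F fun i : s => (γ : RingAut F) i
  have hΦ : ∀ c γ, Φ c γ = ∑ i, c i * (γ : RingAut F) i := fun _ _ => rfl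
  have hker : LinearMap.ker Φ ≠ ⊥ :=
    LinearMap.ker_ne_bot_of_finrank_lt (by simpa [Nat.card_eq_fintype_card] using hcard)
  have hstable : ∀ g ∈ φ.fixingSubgroup, ∀ c ∈ LinearMap.ker Φ,
      (fun i => g (c i)) ∈ LinearMap.ker Φ := by
    intro g hg c hc
    funext γ
    have := congrArg g (congrFun hc (⟨g, hg⟩⁻¹ * γ))
    simpa [hΦ, map_sum] using this
  obtain ⟨c, hc, hc0, hfix⟩ := (LinearMap.ker Φ).exists_ne_zero_forall_apply_eq_of_forall_map_mem
    _ hstable hker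
  choose h hh using fun i => hφ (c i) fun f hf => hfix f hf i
  have hsum : ∑ i, φ (h i) * (i : F) = 0 := by
    simpa [hΦ, ← hh] using congrFun hc 1
  exact hc0 (funext fun i => by
    rw [← hh, linearIndependent_iff'.mp hs _ _ hsum i (Finset.mem_univ _), map_zero, Pi.zero_apply])

variable (F) in
def innerAut : Fˣ →* RingAut F :=
  (MulSemiringAction.toRingAut (ConjAct Fˣ) F).comp ConjAct.toConjAct.toMonoidHom

theorem innerAut_apply (u : Fˣ) (x : F) : innerAut F u x = u * x * ↑u⁻¹ := rfl

theorem innerAut_eq_one_iff {w : Fˣ} : innerAut F w = 1 ↔ (w : F) ∈ Subring.center F := by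
  rw [Subring.mem_center_iff]
  refine ⟨fun h x => ?_, fun h => RingEquiv.ext fun x => ?_⟩
  · have hx : (w : F) * x * ↑w⁻¹ = x := RingEquiv.congr_fun h x
    nth_rewrite 1 [← hx]
    simp [mul_assoc]
  · rw [innerAut_apply, ← h x, Units.mul_inv_cancel_right]
    rfl

theorem innerAut_eq_innerAut_iff {u v : Fˣ} :
    innerAut F u = innerAut F v ↔ ((v⁻¹ * u : Fˣ) : F) ∈ Subring.center F := by
  rw [← innerAut_eq_one_iff, map_mul, map_inv, inv_mul_eq_one, eq_comm]

theorem innerAut_mem_fixingSubgroup {u : Fˣ}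
    (hu : (u : F) ∈ Subring.centralizer (Set.range φ)) : innerAut F u ∈ φ.fixingSubgroup :=
  fun x => by
    rw [innerAut_apply, ← Subring.mem_centralizer_iff.mp hu (φ x) ⟨x, rfl⟩,
      Units.mul_inv_cancel_right]

theorem finite_center_of_mem_centralizer_of_notMem_center [Finite φ.fixingSubgroup] {c : F}
    (hc : c ∈ Subring.centralizer (Set.range φ)) (hcZ : c ∉ Subring.center F) :
    Finite (Subring.center F) := by
  have hne : ∀ t : Subring.center F, c + t ≠ 0 := fun t h => hcZ <| by
    rw [eq_neg_of_add_eq_zero_left h]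
    exact neg_mem t.2
  let u (t : Subring.center F) : Fˣ := Units.mk0 _ (hne t)
  have hu (t : Subring.center F) : innerAut F (u t) ∈ φ.fixingSubgroup :=
    innerAut_mem_fixingSubgroup (add_mem hc (Subring.center_le_centralizer _ t.2))
  refine Finite.of_injective (fun t => (⟨_, hu t⟩ : φ.fixingSubgroup)) fun t s hts => ?_
  have hw := innerAut_eq_innerAut_iff.mp (congrArg Subtype.val hts)
  set w := (((u s)⁻¹ * u t : Fˣ) : F)
  have hfact : c + t = c * w + s * w := by
    rw [← add_mul]
    simp [w, u, mul_inv_cancel_left₀ (hne s)]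
  by_cases hw1 : w = 1
  · simpa [hw1] using hfact
  -- Otherwise `c * (1 - w) = s * w - t` exhibits `c` as a central element.
  refine absurd ?_ hcZ
  have hc' : c = (s * w - t) * (1 - w)⁻¹ := by
    rw [eq_mul_inv_iff_mul_eq₀ (sub_ne_zero.mpr (Ne.symm hw1)), mul_sub, mul_one,
      sub_eq_sub_iff_add_eq_add, hfact]
    abel
  rw [hc']
  exact mul_mem (sub_mem (mul_mem s.2 hw) t.2) (Set.inv_mem_center (sub_mem (one_mem _) hw))

theorem finite_centralizer_range [Finite φ.fixingSubgroup] [Finite (Subring.center F)] :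
    Finite (Subring.centralizer (Set.range φ)) := by
  let s : Set Fˣ := {u | (u : F) ∈ Subring.centralizer (Set.range φ)}
  have hs : s.Finite := by
    refine Set.Finite.of_finite_fibers (innerAut F)
      ((φ.fixingSubgroup : Set (RingAut F)).toFinite.subset ?_) ?_
    · rintro _ ⟨u, hu, rfl⟩
      exact innerAut_mem_fixingSubgroup hu
    · rintro _ ⟨v, -, rfl⟩
      refine (((Subring.center F : Set F).toFinite.preimage Units.val_injective.injOn).image
        (v * ·)).subset ?_
      rintro u ⟨-, hu⟩
      exact ⟨v⁻¹ * u, innerAut_eq_innerAut_iff.mp hu, mul_inv_cancel_left v u⟩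
  refine Set.Finite.to_subtype (((hs.image Units.val).insert 0).subset fun x hx => ?_)
  by_cases hx0 : x = 0
  · exact Or.inl hx0
  · exact Or.inr ⟨Units.mk0 x hx0, hx, rfl⟩

theorem centralizer_range_eq_center_of_isArtinGalois [Module.Finite (Subring.center H) H]
    (hφ : φ.IsArtinGalois) [Finite φ.fixingSubgroup] :
    Subring.centralizer (Set.range φ) = Subring.center F := by
  refine le_antisymm (fun c hc => ?_) (Subring.center_le_centralizer _)
  by_contra hcZ
  -- Otherwise `F` is finite, hence commutative by Wedderburn's little theorem.
  have := finite_center_of_mem_centralizer_of_notMem_center hc hcZ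
  have := finite_centralizer_range (φ := φ)
  have : Finite (Subring.center H) := by
    refine Finite.of_injective (fun t => (⟨φ t, ?_⟩ : Subring.centralizer (Set.range φ)))
      fun t s hts => Subtype.ext (φ.injective (congrArg Subtype.val hts))
    rintro _ ⟨x, rfl⟩
    rw [← map_mul, ← map_mul, Subring.mem_center_iff.mp t.2 x]
  have : Finite H := Module.finite_of_finite (Subring.center H)
  let := Module.compHom F φ
  have : Module.Finite H F := Module.rank_lt_aleph0_iff.mp
    ((rank_le_card_fixingSubgroup hφ).trans_lt Cardinal.natCast_lt_aleph0)
  have : Finite F := Module.finite_of_finite H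
  let := littleWedderburn F
  exact hcZ (Subring.mem_center_iff.mpr fun g => mul_comm g c)

end FixingSubgroup

theorem exists_smul_eq_of_forall_smul_eq {G A K : Type*} [Group G] [Finite G] [CommRing A]
    [MulSemiringAction G A] [CommRing K] [IsDomain K] (ψ : A →+* K) (σ : K →+* K)
    (hσ : ∀ a : A, (∀ g : G, g • a = a) → σ (ψ a) = ψ a) (a : A) :
    ∃ g : G, σ (ψ a) = ψ (g • a) := by
  classical
  have := Fintype.ofFinite G
  set P := (prodXSubSMul G A a).map ψ
  have hP : P.map σ = P := by
    ext n
    simp [P, hσ _ (prodXSubSMul.coeff G A a · n)]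
  have hroot : P.eval (σ (ψ a)) = 0 := by
    rw [← hP, Polynomial.eval_map, Polynomial.eval₂_hom, Polynomial.eval_map, Polynomial.eval₂_hom,
      prodXSubSMul.eval, map_zero, map_zero]
  simp only [P, prodXSubSMul, Polynomial.map_prod, Polynomial.eval_prod,
    Finset.prod_eq_zero_iff] at hroot
  obtain ⟨q, -, hq⟩ := hroot
  obtain ⟨g, rfl⟩ := QuotientGroup.mk_surjective q
  refine ⟨g, ?_⟩
  simpa [sub_eq_zero, MulAction.ofQuotientStabilizer_mk] using hq

instance {H M : Type*} [Semiring H] [Ring M] (φ : H →+* M) :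
    IsInvariantSubring φ.fixingSubgroup (Subring.centralizer (Set.range φ)) where
  smul_mem g x hx := by
    rintro _ ⟨y, rfl⟩
    change φ y * (g : RingAut M) x = (g : RingAut M) x * φ y
    rw [← g.2 y, ← map_mul, ← map_mul, Subring.mem_centralizer_iff.mp hx _ ⟨y, rfl⟩]

section Restriction

variable {H L F : Type*} [DivisionRing H] [DivisionRing L] [DivisionRing F]
  {ι : H →+* L} {κ : L →+* F}

theorem map_mem_center_of_mem_centralizer_range [Module.Finite (Subring.center H) H]
    (hFH : (κ.comp ι).IsArtinGalois) [Finite (κ.comp ι).fixingSubgroup] {t : L}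
    (ht : t ∈ Subring.centralizer (Set.range ι)) : κ t ∈ Subring.center F := by
  rw [← centralizer_range_eq_center_of_isArtinGalois hFH]
  rintro _ ⟨x, rfl⟩
  simp only [RingHom.comp_apply, ← map_mul, Subring.mem_centralizer_iff.mp ht _ ⟨x, rfl⟩]

theorem exists_mem_fixingSubgroup_apply_eq (hLH : ι.IsArtinGalois) [Finite ι.fixingSubgroup]
    (hE : ∀ t ∈ Subring.centralizer (Set.range ι), κ t ∈ Subring.center F)
    {f : RingAut F} (hf : ∀ x, f (κ (ι x)) = κ (ι x))
    {c : L} (hc : c ∈ Subring.centralizer (Set.range ι)) :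
    ∃ g ∈ ι.fixingSubgroup, f (κ c) = κ (g c) := by
  let E := Subring.centralizer (Set.range ι)
  let : CommRing E :=
    { (inferInstance : Ring E) with
      mul_comm a b := Subtype.ext <| κ.injective <| by
        simp only [Subring.coe_mul, map_mul, Subring.mem_center_iff.mp (hE _ a.2)] }
  let σ : Subring.center F →+* Subring.center F :=
    f.toRingHom.restrict _ _ fun z hz => Subring.mem_center_iff.mpr fun y => by
      rw [← f.apply_symm_apply y]
      simp only [RingEquiv.toRingHom_eq_coe, RingHom.coe_coe, ← map_mul,
        Subring.mem_center_iff.mp hz]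
  let ψ : E →+* Subring.center F := κ.restrict _ _ hE
  have hσ (a : E) (ha : ∀ g : ι.fixingSubgroup, g • a = a) : σ (ψ a) = ψ a := by
    obtain ⟨x, hx⟩ := hLH a fun f' hf' => congrArg Subtype.val (ha ⟨f', hf'⟩)
    exact Subtype.ext (by simp [σ, ψ, ← hx, hf])
  obtain ⟨g, hg⟩ := exists_smul_eq_of_forall_smul_eq ψ σ hσ ⟨c, hc⟩
  exact ⟨g, g.2, congrArg Subtype.val hg⟩

theorem image_range_subset_of_isArtinGalois [Module.Finite (Subring.center H) H]
    (hLH : ι.IsArtinGalois) (hFH : (κ.comp ι).IsArtinGalois)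
    [Finite ι.fixingSubgroup] [Finite (κ.comp ι).fixingSubgroup]
    {f : RingAut F} (hf : ∀ x, f (κ (ι x)) = κ (ι x)) :
    f '' Set.range κ ⊆ Set.range κ := by
  rintro _ ⟨_, ⟨y, rfl⟩, rfl⟩
  have hE := fun t (ht : t ∈ Subring.centralizer (Set.range ι)) =>
    map_mem_center_of_mem_centralizer_range hFH ht
  have hZ (z : H) (hz : z ∈ Subring.center H) : ι z ∈ Subring.center L := by
    have hκz := hE _ <| by
      rintro _ ⟨x, rfl⟩
      rw [← map_mul, ← map_mul, Subring.mem_center_iff.mp hz x]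
    exact Subring.mem_center_iff.mpr fun w => κ.injective <| by
      rw [map_mul, map_mul, Subring.mem_center_iff.mp hκz]
  obtain ⟨n, d, c, hc, rfl⟩ := exists_eq_sum_map_mul_mem_centralizer ι hZ y
  choose g _ hg using fun j => exists_mem_fixingSubgroup_apply_eq hLH hE hf (hc j)
  exact ⟨∑ j, ι (d j) * g j (c j), by simp [hf, hg]⟩

end Restriction

theorem exists_ringAut_apply_eq_of_image_range_eq {L F : Type*} [Ring L] [Ring F]
    {κ : L →+* F} (hκ : Injective κ) {f : RingAut F} (h : f '' Set.range κ = Set.range κ) :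
    ∃ g : RingAut L, ∀ y, f (κ y) = κ (g y) := by
  let e : L ≃+* κ.range := RingEquiv.ofBijective κ.rangeRestrict
    ⟨fun a b hab => hκ (congrArg Subtype.val hab), κ.rangeRestrict_surjective⟩
  have hf : κ.range.map f.toRingHom = κ.range := SetLike.coe_injective (by simpa using h)
  have he (z : κ.range) : κ (e.symm z) = z := congrArg Subtype.val (e.apply_symm_apply z)
  exact ⟨(e.trans (f.subringMap.trans (RingEquiv.subringCongr hf))).trans e.symm,
    fun y => by rw [RingEquiv.trans_apply, he]; rfl⟩

theorem restriction_well_defined_general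
    (H L F : Type*) [DivisionRing H] [DivisionRing L] [DivisionRing F]
    [Module.Finite (Subring.center H) H]
    (ι : H →+* L) (κ : L →+* F)
    (hLH : ι.IsArtinGalois) (hFH : (κ.comp ι).IsArtinGalois)
    (hLfin : Finite ι.fixingSubgroup) (hFfin : Finite (κ.comp ι).fixingSubgroup) :
    ∀ f : RingAut F, (∀ x : H, f (κ (ι x)) = κ (ι x)) →
      (f '' (Set.range κ) = Set.range κ) ∧
      ∃ g : RingAut L, (∀ x : H, g (ι x) = ι x) ∧ ∀ y : L, f (κ y) = κ (g y) := by
  intro f hf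
  have hsymm : ∀ x, f.symm (κ (ι x)) = κ (ι x) := fun x => by rw [RingEquiv.symm_apply_eq, hf]
  have himage : f '' Set.range κ = Set.range κ :=
    (image_range_subset_of_isArtinGalois hLH hFH hf).antisymm fun y hy =>
      ⟨f.symm y, image_range_subset_of_isArtinGalois hLH hFH hsymm ⟨y, hy, rfl⟩,
        f.apply_symm_apply y⟩
  obtain ⟨g, hg⟩ := exists_ringAut_apply_eq_of_image_range_eq κ.injective himage
  exact ⟨himage, g, fun x => κ.injective (by rw [← hg, hf]), hg⟩

/-- Let `H` be a division ring of finite dimension over its center, and let `H ⊆ L ⊆ F` be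
division rings (along injective ring homomorphisms `ι : H → L` and `κ : L → F`) such that both
`L/H` and `F/H` are Galois in the sense of Artin with finite Galois groups. Then the restriction
map `Gal(F/H) → Gal(L/H)` is well-defined: every automorphism of `F` fixing `H` pointwise
restricts to an automorphism of `L` fixing `H` pointwise. -/
theorem restriction_well_defined
    (H L F : Type*) [DivisionRing H] [DivisionRing L] [DivisionRing F]
    [Module.Finite (Subring.center H) H]
    (ι : H →+* L) (κ : L →+* F)
    (hι : Function.Injective ι) (hκ : Function.Injective κ)
    (hLH : ι.IsArtinGalois) (hFH : (κ.comp ι).IsArtinGalois)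
    (hLfin : Finite ι.fixingSubgroup) (hFfin : Finite (κ.comp ι).fixingSubgroup) :
    ∀ f : RingAut F, (∀ x : H, f (κ (ι x)) = κ (ι x)) →
      (f '' (Set.range κ) = Set.range κ) ∧
      ∃ g : RingAut L, (∀ x : H, g (ι x) = ι x) ∧ ∀ y : L, f (κ y) = κ (g y) :=
  restriction_well_defined_general H L F ι κ hLH hFH hLfin hFfin
end

section
/- Let L be a finite field, K a subfield of L, and σ a ring automorphism of K of order d. If d is coprime to the degree [L : K], then there exists a unique ring automorphism τ of L such that τ has order d and τ extends σ (i.e., τ(x) = σ(x) for all x ∈ K). -/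
/-!
Over the prime field `𝔽_p`, the automorphism group of `L` is cyclic, hence abelian, and
restriction to `K` is a surjection onto the automorphisms of `K` whose kernel `Gal(L/K)` has
order `[L : K]`. In an abelian group, if `σ^d = 1` and `d` is prime to the order of the kernel,
then any lift `τ₀` of `σ` can be corrected by the unique `d`-th root of `τ₀⁻ᵈ` in the kernel to a
lift of exponent `d`, and two such lifts differ by a kernel element of exponent `d`, hence agree.
-/

open scoped IsMulCommutative

theorem MonoidHom.existsUnique_pow_eq_one_and_apply_eq {G Q : Type*} [Group G]
    [IsMulCommutative G] [Group Q] (π : G →* Q) (hπ : Function.Surjective π) {d : ℕ}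
    (hd : (Nat.card π.ker).Coprime d) {σ : Q} (hσ : σ ^ d = 1) :
    ∃! τ : G, τ ^ d = 1 ∧ π τ = σ := by
  obtain ⟨τ₀, rfl⟩ := hπ σ
  have hτ₀ : (τ₀ ^ d)⁻¹ ∈ π.ker := by simp [MonoidHom.mem_ker, hσ]
  set κ : π.ker := (powCoprime hd).symm ⟨_, hτ₀⟩
  have hκ : (κ : G) ^ d = (τ₀ ^ d)⁻¹ :=
    congrArg Subtype.val ((powCoprime hd).apply_symm_apply ⟨_, hτ₀⟩)
  refine ⟨τ₀ * κ, ⟨?_, ?_⟩, ?_⟩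
  · rw [mul_pow, hκ, mul_inv_cancel]
  · rw [map_mul, κ.2, mul_one]
  · rintro τ ⟨hτd, hτπ⟩
    have hmem : τ * (τ₀ * κ)⁻¹ ∈ π.ker := by
      rw [MonoidHom.mem_ker, map_mul, map_inv, map_mul, κ.2, mul_one, hτπ, mul_inv_cancel]
    have : (⟨_, hmem⟩ : π.ker) = 1 := (powCoprime hd).injective <| by
      ext
      simp [powCoprime, mul_pow, hτd, hκ]
    exact mul_inv_eq_one.mp (congrArg Subtype.val this)

theorem MonoidHom.existsUnique_orderOf_eq_and_apply_eq {G Q : Type*} [Group G]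
    [IsMulCommutative G] [Group Q] (π : G →* Q) (hπ : Function.Surjective π) (σ : Q)
    (hσ : (Nat.card π.ker).Coprime (orderOf σ)) :
    ∃! τ : G, orderOf τ = orderOf σ ∧ π τ = σ := by
  refine existsUnique_congr (fun τ => ⟨fun ⟨hτ, hπτ⟩ => ⟨?_, hπτ⟩, fun ⟨hτ, hπτ⟩ => ⟨?_, hπτ⟩⟩)
    |>.mp (π.existsUnique_pow_eq_one_and_apply_eq hπ hσ (pow_orderOf_eq_one σ))
  · exact (orderOf_dvd_of_pow_eq_one hτ).antisymm (hπτ ▸ orderOf_map_dvd π τ)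
  · rw [← hτ, pow_orderOf_eq_one]

theorem AlgEquiv.card_ker_restrictNormalHom (F K L : Type*) [Field F] [Field K] [Field L]
    [Algebra F K] [Algebra F L] [Algebra K L] [IsScalarTower F K L] [FiniteDimensional F L]
    [IsGalois F L] [IsGalois F K] :
    Nat.card (restrictNormalHom K : Gal(L/F) →* Gal(K/F)).ker = Module.finrank K L := by
  have : FiniteDimensional F K := Module.Finite.left F K L
  have := (restrictNormalHom K : Gal(L/F) →* Gal(K/F)).ker.card_mul_index
  rw [Subgroup.index_ker, MonoidHom.range_eq_top_of_surjective _ (restrictNormalHom_surjective L),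
    Subgroup.card_top, IsGalois.card_aut_eq_finrank, IsGalois.card_aut_eq_finrank,
    ← Module.finrank_mul_finrank F K L, mul_comm] at this
  exact Nat.eq_of_mul_eq_mul_left Module.finrank_pos this

theorem AlgEquiv.restrictNormalHom_eq_iff {F K L : Type*} [Field F] [Field K] [Field L]
    [Algebra F K] [Algebra F L] [Algebra K L] [IsScalarTower F K L] [Normal F K]
    (τ : Gal(L/F)) (σ : Gal(K/F)) :
    restrictNormalHom K τ = σ ↔ ∀ x : K, τ (algebraMap K L x) = algebraMap K L (σ x) := by
  refine AlgEquiv.ext_iff.trans <| forall_congr' fun x => ?_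
  rw [← (algebraMap K L).injective.eq_iff, ← restrictNormal_commutes]
  rfl

def RingAut.mulEquivAlgAut (R A : Type*) [CommSemiring R] [Semiring A] [Algebra R A]
    [Subsingleton (R →+* A)] : RingAut A ≃* (A ≃ₐ[R] A) where
  toFun f := AlgEquiv.ofRingEquiv (f := f) fun r =>
    DFunLike.congr_fun (Subsingleton.elim ((f : A →+* A).comp (algebraMap R A)) _) r
  invFun f := f.toRingEquiv
  left_inv _ := rfl
  right_inv _ := rfl
  map_mul' _ _ := rfl

/-- Let `L` be a finite field, `K` a subfield of `L`, and `σ` an automorphism of `K` of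
order `d`. If `d` is coprime to the degree `[L : K]`, then there is a unique automorphism
`τ` of `L` of order `d` extending `σ`. -/
theorem existsUnique_automorphism_extension_of_coprime
    (L : Type*) [Field L] [Finite L] (K : Subfield L)
    (σ : RingAut K) (d : ℕ) (hd : orderOf σ = d)
    (h : Nat.Coprime d (Module.finrank K L)) :
    ∃! τ : RingAut L, orderOf τ = d ∧ ∀ x : K, τ x = (σ x : L) := by
  obtain ⟨p, _⟩ := CharP.exists L
  have : Fact p.Prime := ⟨CharP.char_is_prime L p⟩
  let _ := ZMod.algebra L p
  let _ := ZMod.algebra K p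
  -- Spelled out because `K`, as an additive subgroup of the `ZMod p`-module `L`, carries a
  -- second `ZMod p`-action that elaboration would otherwise pick.
  have : @IsScalarTower (ZMod p) K L Algebra.toSMul Algebra.toSMul Algebra.toSMul :=
    .of_algebraMap_eq' (Subsingleton.elim _ _)
  let eL := RingAut.mulEquivAlgAut (ZMod p) L
  let eK := RingAut.mulEquivAlgAut (ZMod p) K
  let res : Gal(L/ZMod p) →* Gal(K/ZMod p) := AlgEquiv.restrictNormalHom K
  have hcop : (Nat.card res.ker).Coprime (orderOf (eK σ)) := by
    rw [AlgEquiv.card_ker_restrictNormalHom, MulEquiv.orderOf_eq, hd]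
    exact h.symm
  refine (eL.toEquiv.existsUnique_congr fun τ => ?_).mpr
    (res.existsUnique_orderOf_eq_and_apply_eq (AlgEquiv.restrictNormalHom_surjective L) _ hcop)
  rw [MulEquiv.toEquiv_eq_coe, MulEquiv.coe_toEquiv, MulEquiv.orderOf_eq, MulEquiv.orderOf_eq, hd,
    AlgEquiv.restrictNormalHom_eq_iff]
  rfl
end
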